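/- arXiv:1510.07169 — 2 statements merged into one kernel-verified Lean document; each statement's English description precedes it below -/
import Mathlib

section
/- If λ > ‖Xᵀy‖_∞, then α = 0 is the unique minimizer of the penalized Lasso objective f̃(α) = ½‖Xα - y‖₂² + λ‖α‖₁. -/
lemma lasso_swap (m p : ℕ) (X : Matrix (Fin m) (Fin p) ℝ) (y : Fin m → ℝ)
    (α : Fin p → ℝ) :
    ∑ j, X.mulVec α j * y j = ∑ i, α i * X.transpose.mulVec y i := by
  simp only [Matrix.mulVec, dotProduct, Matrix.transpose_apply,
    Finset.sum_mul, Finset.mul_sum]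
  rw [Finset.sum_comm]
  refine Finset.sum_congr rfl fun i _ => Finset.sum_congr rfl fun j _ => by ring

/-- If `λ > ‖Xᵀy‖_∞`, then `α = 0` is the unique minimizer of the penalized Lasso
objective `f̃(α) = ½‖Xα-y‖² + λ‖α‖₁`. -/
theorem stmt_14 (m p : ℕ) (X : Matrix (Fin m) (Fin p) ℝ) (y : Fin m → ℝ)
    (lam : ℝ) (hlam : (⨆ i : Fin p, |X.transpose.mulVec y i|) < lam) :
    (∀ α : Fin p → ℝ,
      (1/2) * ∑ j, (X.mulVec 0 j - y j) ^ 2 + lam * ∑ i, |(0 : Fin p → ℝ) i| ≤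
        (1/2) * ∑ j, (X.mulVec α j - y j) ^ 2 + lam * ∑ i, |α i|) ∧
    ∀ α : Fin p → ℝ, α ≠ 0 →
      (1/2) * ∑ j, (X.mulVec 0 j - y j) ^ 2 + lam * ∑ i, |(0 : Fin p → ℝ) i| <
        (1/2) * ∑ j, (X.mulVec α j - y j) ^ 2 + lam * ∑ i, |α i| := by
  set S : ℝ := ⨆ i : Fin p, |X.transpose.mulVec y i| with hS
  have hbdd : BddAbove (Set.range fun i : Fin p => |X.transpose.mulVec y i|) :=
    (Set.finite_range _).bddAbove
  have hSle : ∀ i : Fin p, |X.transpose.mulVec y i| ≤ S := fun i => le_ciSup hbdd i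
  have hzero : ∀ j, X.mulVec (0 : Fin p → ℝ) j = 0 := by
    simp [Matrix.mulVec_zero]
  have key : ∀ α : Fin p → ℝ,
      (1/2) * ∑ j, (X.mulVec α j - y j) ^ 2 + lam * ∑ i, |α i|
      = (1/2) * ∑ j, (X.mulVec 0 j - y j) ^ 2 + lam * ∑ i, |(0 : Fin p → ℝ) i|
        + (1/2) * ∑ j, (X.mulVec α j) ^ 2
        - ∑ i, α i * X.transpose.mulVec y i + lam * ∑ i, |α i| := by
    intro α
    rw [← lasso_swap m p X y α]
    simp only [hzero, Pi.zero_apply, abs_zero, Finset.sum_const_zero, mul_zero,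
      zero_sub, neg_sq, add_zero]
    have : ∑ j, (X.mulVec α j - y j) ^ 2
        = ∑ j, (X.mulVec α j) ^ 2 - 2 * ∑ j, X.mulVec α j * y j + ∑ j, y j ^ 2 := by
      rw [Finset.mul_sum, ← Finset.sum_sub_distrib, ← Finset.sum_add_distrib]
      exact Finset.sum_congr rfl fun j _ => by ring
    rw [this]; ring
  have hdot : ∀ α : Fin p → ℝ,
      ∑ i, α i * X.transpose.mulVec y i ≤ S * ∑ i, |α i| := by
    intro α
    rw [Finset.mul_sum]
    refine Finset.sum_le_sum fun i _ => ?_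
    calc α i * X.transpose.mulVec y i ≤ |α i * X.transpose.mulVec y i| := le_abs_self _
      _ = |α i| * |X.transpose.mulVec y i| := abs_mul _ _
      _ ≤ |α i| * S := by
          exact mul_le_mul_of_nonneg_left (hSle i) (abs_nonneg _)
      _ = S * |α i| := mul_comm _ _
  have hsq : ∀ α : Fin p → ℝ, (0:ℝ) ≤ (1/2) * ∑ j, (X.mulVec α j) ^ 2 := by
    intro α
    have : (0:ℝ) ≤ ∑ j, (X.mulVec α j) ^ 2 :=
      Finset.sum_nonneg fun j _ => sq_nonneg _
    linarith
  constructor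
  · intro α
    rw [key α]
    have h1 := hdot α
    have h2 := hsq α
    have h3 : S * ∑ i, |α i| ≤ lam * ∑ i, |α i| :=
      mul_le_mul_of_nonneg_right hlam.le (Finset.sum_nonneg fun i _ => abs_nonneg _)
    linarith
  · intro α hα
    rw [key α]
    have h1 := hdot α
    have h2 := hsq α
    have hpos : 0 < ∑ i, |α i| := by
      obtain ⟨i, hi⟩ := Function.ne_iff.mp hα
      refine Finset.sum_pos' (fun j _ => abs_nonneg _) ⟨i, Finset.mem_univ i, ?_⟩
      simpa [abs_pos] using hi
    have h3 : S * ∑ i, |α i| < lam * ∑ i, |α i| :=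
      mul_lt_mul_of_pos_right hlam hpos
    linarith
end

section
/- Expected value of randomized Frank-Wolfe: if the expected primal gaps h_k of the randomized Frank-Wolfe algorithm with exact line search satisfy h_1 ≤ C_f and h_{k+1} ≤ min_{λ∈(0,1]} (h_k - λ h_k + λ² C_f) for all k ≥ 1, then h_k ≤ 4C_f/(k+2) for all k ≥ 1. -/
/-- Sublinear convergence in expectation of randomized Frank-Wolfe: if the expected
primal gaps satisfy `h_1 ≤ C_f` and `h_{k+1} ≤ min_{λ∈(0,1]} (h_k - λ h_k + λ² C_f)`
for all `k ≥ 1`, then `h_k ≤ 4C_f/(k+2)` for all `k ≥ 1`. -/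
theorem stmt_19 (C : ℝ) (hC : 0 < C) (h : ℕ → ℝ) (hnn : ∀ k, 0 ≤ h k)
    (h1 : h 1 ≤ C)
    (hrec : ∀ k ≥ 1, ∀ l ∈ Set.Ioc (0 : ℝ) 1, h (k + 1) ≤ h k - l * h k + l ^ 2 * C) :
    ∀ k ≥ 1, h k ≤ 4 * C / (k + 2) := by
  intro k hk
  induction k with
  | zero => omega
  | succ n ih =>
    rcases Nat.eq_or_lt_of_le hk with he | hlt
    · -- n + 1 = 1
      have : n = 0 := by omega
      subst this
      have : ((0:ℕ)+1:ℝ) + 2 = 3 := by norm_num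
      push_cast
      nlinarith
    · have hn1 : 1 ≤ n := by omega
      have ihn := ih hn1
      have hpos : (0:ℝ) < (n:ℝ) + 2 := by positivity
      have hl : (2 / ((n:ℝ) + 2)) ∈ Set.Ioc (0:ℝ) 1 := by
        constructor
        · positivity
        · rw [div_le_one hpos]; linarith
      have hr := hrec n hn1 _ hl
      have key : h (n+1) ≤ (1 - 2/((n:ℝ)+2)) * h n + (2/((n:ℝ)+2))^2 * C := by
        linarith [hr]
      have h2 : (1 - 2/((n:ℝ)+2)) * h n ≤ (1 - 2/((n:ℝ)+2)) * (4*C/((n:ℝ)+2)) := by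
        apply mul_le_mul_of_nonneg_left ihn
        rw [sub_nonneg, div_le_one hpos]; linarith
      have goal : (1 - 2/((n:ℝ)+2)) * (4*C/((n:ℝ)+2)) + (2/((n:ℝ)+2))^2 * C
          ≤ 4*C/((n:ℝ)+3) := by
        have hpos3 : (0:ℝ) < (n:ℝ)+3 := by positivity
        have expand : (1 - 2/((n:ℝ)+2)) * (4*C/((n:ℝ)+2)) + (2/((n:ℝ)+2))^2 * C
            = 4*C*((n:ℝ)+1)/((n:ℝ)+2)^2 := by
          field_simp
          ring
        rw [expand, div_le_div_iff₀ (by positivity) hpos3]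
        nlinarith
      have : ((n:ℝ) + 1) + 2 = (n:ℝ) + 3 := by ring
      push_cast
      rw [this]
      linarith
end
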